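/- arXiv:1312.5518 — 3 statements merged into one kernel-verified Lean document; each statement's English description precedes it below -/
import Mathlib

section
/- Let S be a semigroup that is the disjoint union of free monogenic subsemigroups ⟨a⟩ and ⟨b⟩, and suppose ab = a^m and ba = b^n for some m, n ≥ 1. Then m = n = 2. -/
/-!
Compute `a * b * a` in two ways. On one hand `(a * b) * a = a ^ m * a = a ^ (m + 1)`. On the other,
`ab = a ^ m` lets each factor `b` be absorbed into a power of `a` at the cost of raising the exponent
by `m - 1`, so `a * (b * a) = a * b ^ n = a ^ (1 + n (m - 1))`. Since `a` has infinite order,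
`m = n (m - 1)`; hence `m - 1` divides `m`, so `m - 1 = 1` and then `n = 2`.
-/

/-- `pw a n` is `a ^ n` for `n ≥ 1` (with junk value `a` at `n = 0`),
defined in any magma. -/
def pw {S : Type*} [Mul S] (a : S) : ℕ → S
  | 0 => a
  | 1 => a
  | n + 2 => pw a (n + 1) * a

/-- The monogenic subsemigroup `⟨a⟩ = {a^n : n ≥ 1}`. -/
def genSet {S : Type*} [Mul S] (a : S) : Set S := {x | ∃ n, 1 ≤ n ∧ pw a n = x}

/-- `a` has infinite order: its positive powers are pairwise distinct,
i.e. `⟨a⟩` is free monogenic. -/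
def InfOrder {S : Type*} [Mul S] (a : S) : Prop :=
  ∀ m n : ℕ, 1 ≤ m → 1 ≤ n → pw a m = pw a n → m = n

section Powers

variable {S : Type*}

lemma pw_succ [Mul S] (a : S) {k : ℕ} (hk : 1 ≤ k) : pw a (k + 1) = pw a k * a := by
  match k, hk with
  | 1, _ => rfl
  | k + 2, _ => rfl

variable [Semigroup S] {a b : S} {m : ℕ}

lemma pw_mul_pw (a : S) {p q : ℕ} (hp : 1 ≤ p) (hq : 1 ≤ q) :
    pw a p * pw a q = pw a (p + q) := by
  induction q, hq using Nat.le_induction with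
  | base => exact (pw_succ a hp).symm
  | succ q hq ih =>
    rw [pw_succ a hq, ← mul_assoc, ih, ← pw_succ a (by omega), Nat.add_assoc]

lemma pw_mul_of_mul_eq_pw (hm : 1 ≤ m) (hab : a * b = pw a m) {j : ℕ} (hj : 1 ≤ j) :
    pw a j * b = pw a (j + (m - 1)) := by
  induction j, hj using Nat.le_induction with
  | base => rw [show pw a 1 * b = a * b from rfl, hab]; congr 1; omega
  | succ j hj ih =>
    rw [pw_succ a hj, mul_assoc, hab, pw_mul_pw a hj hm]
    congr 1
    omega

lemma pw_mul_pw_of_mul_eq_pw (hm : 1 ≤ m) (hab : a * b = pw a m) {j k : ℕ} (hj : 1 ≤ j)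
    (hk : 1 ≤ k) : pw a j * pw b k = pw a (j + k * (m - 1)) := by
  induction k, hk using Nat.le_induction with
  | base => rw [one_mul]; exact pw_mul_of_mul_eq_pw hm hab hj
  | succ k hk ih =>
    rw [pw_succ b hk, ← mul_assoc, ih, pw_mul_of_mul_eq_pw hm hab (by omega), Nat.add_assoc,
      Nat.succ_mul]

end Powers

lemma Nat.eq_one_and_eq_two_of_add_one_eq_mul {d n : ℕ} (h : d + 1 = n * d) : d = 1 ∧ n = 2 := by
  have hd : d ∣ 1 := (Nat.dvd_add_right (dvd_refl d)).mp (h ▸ dvd_mul_left d n)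
  obtain rfl := Nat.dvd_one.mp hd
  omega

theorem stmt_6_general {S : Type*} [Semigroup S] (a b : S)
    (ha : InfOrder a)
    (m n : ℕ) (hm : 1 ≤ m) (hn : 1 ≤ n)
    (h1 : a * b = pw a m) (h2 : b * a = pw b n) :
    m = 2 ∧ n = 2 := by
  have left : a * b * a = pw a (m + 1) := by rw [h1, pw_succ a hm]
  have right : a * (b * a) = pw a (1 + n * (m - 1)) := by
    rw [h2]
    exact pw_mul_pw_of_mul_eq_pw hm h1 le_rfl hn
  have hexp : m + 1 = 1 + n * (m - 1) :=
    ha _ _ (by omega) (by omega) (by rw [← left, ← right, mul_assoc])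
  obtain ⟨hd, rfl⟩ := Nat.eq_one_and_eq_two_of_add_one_eq_mul (d := m - 1) (n := n) (by omega)
  omega

/-- In a disjoint union of two free monogenic semigroups ⟨a⟩ ∪ ⟨b⟩,
if `ab = a^m` and `ba = b^n` then `m = n = 2`. -/
theorem stmt_6 {S : Type*} [Semigroup S] (a b : S)
    (ha : InfOrder a) (hb : InfOrder b)
    (hdisj : genSet a ∩ genSet b = ∅)
    (hcover : genSet a ∪ genSet b = Set.univ)
    (m n : ℕ) (hm : 1 ≤ m) (hn : 1 ≤ n)
    (h1 : a * b = pw a m) (h2 : b * a = pw b n) :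
    m = 2 ∧ n = 2 :=
  stmt_6_general a b ha m n hm hn h1 h2
end

section
/- The semigroup defined by the presentation ⟨a, b | ab = a², ba = b²⟩ is the disjoint union of the free monogenic subsemigroups ⟨a⟩ and ⟨b⟩. -/
section Magma

variable {S : Type*} [Mul S]

theorem pw_eq_self_of_mul_self_eq {a : S} (ha : a * a = a) : ∀ n, pw a n = a
  | 0 | 1 => rfl
  | n + 2 => by rw [pw, pw_eq_self_of_mul_self_eq ha (n + 1), ha]

theorem map_pw {T : Type*} [Mul T] (f : S →ₙ* T) (a : S) : ∀ n, f (pw a n) = pw (f a) n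
  | 0 | 1 => rfl
  | n + 2 => by rw [pw, map_mul, map_pw f a (n + 1), pw]

theorem map_eq_of_mem_genSet {T : Type*} [Mul T] (f : S →ₙ* T) {a x : S}
    (ha : f a * f a = f a) (hx : x ∈ genSet a) : f x = f a := by
  obtain ⟨n, -, rfl⟩ := hx
  rw [map_pw, pw_eq_self_of_mul_self_eq ha]

theorem disjoint_genSet_of_map {T : Type*} [Mul T] (f : S →ₙ* T) {a b : S}
    (ha : f a * f a = f a) (hb : f b * f b = f b) (hab : f a ≠ f b) :
    Disjoint (genSet a) (genSet b) :=
  Set.disjoint_left.mpr fun _ hxa hxb =>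
    hab ((map_eq_of_mem_genSet f ha hxa).symm.trans (map_eq_of_mem_genSet f hb hxb))

theorem InfOrder.of_map {T : Type*} [Mul T] (f : S →ₙ* T) {a : S} (h : InfOrder (f a)) :
    InfOrder a := fun m n hm hn hmn => h m n hm hn (by rw [← map_pw, ← map_pw, hmn])

end Magma

section Semigroup

variable {S : Type*} [Semigroup S] {a b : S}

theorem pw_mul_of_mul_eq_mul_self (hab : a * b = a * a) :
    ∀ {n}, 1 ≤ n → pw a n * b = pw a (n + 1)
  | 1, _ => hab
  | n + 2, _ => by rw [pw, mul_assoc, hab, ← mul_assoc]; rfl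

theorem pw_mul_pw_of_mul_eq_mul_self (hab : a * b = a * a) {m : ℕ} (hm : 1 ≤ m) :
    ∀ {n}, 1 ≤ n → pw a m * pw b n = pw a (m + n)
  | 1, _ => pw_mul_of_mul_eq_mul_self hab hm
  | n + 2, _ => by
    rw [pw, ← mul_assoc, pw_mul_pw_of_mul_eq_mul_self hab hm (by omega),
      pw_mul_of_mul_eq_mul_self hab (by omega)]
    rfl

theorem pw_mul_pw_s8 (a : S) {m n : ℕ} (hm : 1 ≤ m) (hn : 1 ≤ n) :
    pw a m * pw a n = pw a (m + n) :=
  pw_mul_pw_of_mul_eq_mul_self rfl hm hn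

theorem mul_mem_genSet (hab : a * b = a * a) {x y : S} (hx : x ∈ genSet a)
    (hy : y ∈ genSet a ∪ genSet b) : x * y ∈ genSet a := by
  obtain ⟨m, hm, rfl⟩ := hx
  rcases hy with ⟨n, hn, rfl⟩ | ⟨n, hn, rfl⟩
  · exact ⟨m + n, by omega, (pw_mul_pw_s8 a hm hn).symm⟩
  · exact ⟨m + n, by omega, (pw_mul_pw_of_mul_eq_mul_self hab hm hn).symm⟩

theorem mul_mem_genSet_union (hab : a * b = a * a) (hba : b * a = b * b) {x y : S}
    (hx : x ∈ genSet a ∪ genSet b) (hy : y ∈ genSet a ∪ genSet b) :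
    x * y ∈ genSet a ∪ genSet b :=
  hx.imp (mul_mem_genSet hab · hy) (mul_mem_genSet hba · (Set.union_comm _ _ ▸ hy))

end Semigroup

theorem pw_ofAdd_one : ∀ {n : ℕ}, 1 ≤ n →
    pw (Multiplicative.ofAdd (1 : ℕ)) n = Multiplicative.ofAdd n
  | 1, _ => rfl
  | n + 2, _ => by rw [pw, pw_ofAdd_one (by omega)]; rfl

theorem infOrder_ofAdd_one : InfOrder (Multiplicative.ofAdd (1 : ℕ)) := fun m n hm hn h =>
  Multiplicative.ofAdd.injective (by rwa [pw_ofAdd_one hm, pw_ofAdd_one hn] at h)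

def LeftZero (α : Type*) := α

instance {α : Type*} : Semigroup (LeftZero α) where
  mul x _ := x
  mul_assoc _ _ _ := rfl

namespace Stmt8

/-- The generator `a` in the free semigroup on two letters. -/
def A : FreeSemigroup (Fin 2) := FreeSemigroup.of 0

/-- The generator `b` in the free semigroup on two letters. -/
def B : FreeSemigroup (Fin 2) := FreeSemigroup.of 1

/-- The relations `ab = a²` and `ba = b²`. -/
def rel : FreeSemigroup (Fin 2) → FreeSemigroup (Fin 2) → Prop := fun u v =>
  (u = A * B ∧ v = pw A 2) ∨ (u = B * A ∧ v = pw B 2)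

/-- The semigroup defined by the presentation `⟨a, b | ab = a², ba = b²⟩`. -/
def Sem := (conGen rel).Quotient

instance : Semigroup Sem := inferInstanceAs (Semigroup (conGen rel).Quotient)

/-- The image of `a` in the presented semigroup. -/
def a' : Sem := (A : (conGen rel).Quotient)

/-- The image of `b` in the presented semigroup. -/
def b' : Sem := (B : (conGen rel).Quotient)

theorem a'_mul_b' : a' * b' = a' * a' :=
  (Con.eq _).mpr (ConGen.Rel.of _ _ (Or.inl ⟨rfl, rfl⟩))

theorem b'_mul_a' : b' * a' = b' * b' :=
  (Con.eq _).mpr (ConGen.Rel.of _ _ (Or.inr ⟨rfl, rfl⟩))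

section Lift

variable {T : Type*} [Semigroup T] {x y : T}

theorem conGen_rel_le_ker (hxy : x * y = x * x) (hyx : y * x = y * y) :
    conGen rel ≤ Con.ker (FreeSemigroup.lift ![x, y]) :=
  Con.conGen_le.mpr <| by rintro u v (⟨rfl, rfl⟩ | ⟨rfl, rfl⟩) <;> assumption

def lift (hxy : x * y = x * x) (hyx : y * x = y * y) : Sem →ₙ* T where
  toFun q := (conGen rel).liftOn q (FreeSemigroup.lift ![x, y])
    fun _ _ h => conGen_rel_le_ker hxy hyx h
  map_mul' p q := Con.induction_on₂ p q (map_mul _)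

end Lift

theorem mem_genSet_union (x : Sem) : x ∈ genSet a' ∪ genSet b' := by
  induction x using Con.induction_on with | H w => ?_
  induction w using FreeSemigroup.recOnMul with
  | ih1 i =>
    fin_cases i
    · exact Or.inl ⟨1, le_rfl, rfl⟩
    · exact Or.inr ⟨1, le_rfl, rfl⟩
  | ih2 _ _ hi hw =>
    rw [Con.coe_mul]
    exact mul_mem_genSet_union a'_mul_b' b'_mul_a' hi hw

/-- The semigroup `⟨a, b | ab = a², ba = b²⟩` is the disjoint union of the
free monogenic subsemigroups `⟨a⟩` and `⟨b⟩`. -/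
theorem stmt_8 :
    InfOrder a' ∧ InfOrder b' ∧
      genSet a' ∩ genSet b' = ∅ ∧
      genSet a' ∪ genSet b' = Set.univ := by
  let length := lift (x := Multiplicative.ofAdd (1 : ℕ)) (y := Multiplicative.ofAdd 1) rfl rfl
  let firstLetter := lift (T := LeftZero Bool) (x := false) (y := true) rfl rfl
  refine ⟨.of_map length infOrder_ofAdd_one, .of_map length infOrder_ofAdd_one, ?_,
    Set.eq_univ_of_forall mem_genSet_union⟩
  exact Set.disjoint_iff_inter_eq_empty.mp
    (disjoint_genSet_of_map firstLetter rfl rfl Bool.false_ne_true)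

end Stmt8
end

section
/- Let S be a semigroup that is the disjoint union of free monogenic subsemigroups ⟨a⟩, ⟨b⟩, ⟨c⟩, and suppose ab = b², ba = a², ac = c², ca = a², bc = c^k, cb = a^l for positive integers k, l. Then k = l = 2. -/
/-! Evaluating `b(cb) = (bc)b` with the defining relations gives `a^(l+1) = a^(k+l-1)`, and
evaluating `c(bc) = (cb)c` gives `c^(k+1) = c^(l+1)`. Both evaluations only use the two rules
`xy = y² ⟹ x yⁿ = yⁿ⁺¹` and `xy = y², xz = yⁿ ⟹ xᵐ z = y^(m+n-1)`. Since `⟨a⟩` and `⟨c⟩` are free,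
the exponents agree, so `k = 2` and then `l = k = 2`. -/

section Semigroup

variable {S : Type*} [Semigroup S] {x y z : S}

lemma pw_succ_s17 (y : S) {n : ℕ} (hn : 1 ≤ n) : pw y (n + 1) = pw y n * y := by
  obtain ⟨m, rfl⟩ := Nat.exists_eq_add_of_le' hn
  rfl

lemma mul_pw_of_mul_eq_pw_two (h : x * y = pw y 2) :
    ∀ n, 1 ≤ n → x * pw y n = pw y (n + 1) := by
  intro n hn
  induction n, hn using Nat.le_induction with
  | base => exact h
  | succ n hn ih =>
    rw [pw_succ_s17 y hn, ← mul_assoc, ih, ← pw_succ_s17 y (by omega)]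

lemma pw_mul_of_mul_eq_pw_s17 {n : ℕ} (h : x * y = pw y 2) (hz : x * z = pw y n) (hn : 1 ≤ n) :
    ∀ m, 1 ≤ m → pw x m * z = pw y (m + n - 1) := by
  intro m hm
  induction m, hm using Nat.le_induction with
  | base => rwa [Nat.add_sub_cancel_left]
  | succ m hm ih =>
    rw [← mul_pw_of_mul_eq_pw_two (x := x) rfl m hm, mul_assoc, ih,
      mul_pw_of_mul_eq_pw_two h _ (by omega)]
    congr 1
    omega

end Semigroup

theorem stmt_17_general {S : Type*} [Semigroup S] (a b c : S)
    (ha : InfOrder a) (hc : InfOrder c)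
    (k l : ℕ) (hk : 1 ≤ k) (hl : 1 ≤ l)
    (h2 : b * a = pw a 2)
    (h3 : a * c = pw c 2) (h4 : c * a = pw a 2)
    (h5 : b * c = pw c k) (h6 : c * b = pw a l) :
    k = 2 ∧ l = 2 := by
  have hbcb : pw a (l + 1) = pw a (k + l - 1) :=
    calc pw a (l + 1) = b * (c * b) := by rw [h6, mul_pw_of_mul_eq_pw_two h2 l hl]
      _ = (b * c) * b := (mul_assoc b c b).symm
      _ = pw a (k + l - 1) := by rw [h5, pw_mul_of_mul_eq_pw_s17 h4 h6 hl k hk]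
  have hcbc : pw c (k + 1) = pw c (l + 1) :=
    calc pw c (k + 1) = c * (b * c) := by rw [h5, mul_pw_of_mul_eq_pw_two (x := c) rfl k hk]
      _ = (c * b) * c := (mul_assoc c b c).symm
      _ = pw c (l + 1) := by rw [h6, pw_mul_of_mul_eq_pw_s17 h3 h3 one_le_two l hl]; rfl
  have hk2 := ha _ _ (by omega) (by omega) hbcb
  have hkl := hc _ _ (by omega) (by omega) hcbc
  omega

theorem stmt_17 {S : Type*} [Semigroup S] (a b c : S)
    (ha : InfOrder a) (hb : InfOrder b) (hc : InfOrder c)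
    (hab : genSet a ∩ genSet b = ∅) (hac : genSet a ∩ genSet c = ∅)
    (hbc : genSet b ∩ genSet c = ∅)
    (hcover : genSet a ∪ genSet b ∪ genSet c = Set.univ)
    (k l : ℕ) (hk : 1 ≤ k) (hl : 1 ≤ l)
    (h1 : a * b = pw b 2) (h2 : b * a = pw a 2)
    (h3 : a * c = pw c 2) (h4 : c * a = pw a 2)
    (h5 : b * c = pw c k) (h6 : c * b = pw a l) :
    k = 2 ∧ l = 2 :=
  stmt_17_general a b c ha hc k l hk hl h2 h3 h4 h5 h6
end
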